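/- arXiv:1102.2723 — 2 statements merged into one kernel-verified Lean document; each statement's English description precedes it below -/
import Mathlib

section
/- One has ∑_{n=0}^∞ P_n(0;p,q)² = √q · ∑_{n=0}^∞ ((p;q)_n/(q;q)_n)·q^n = √q · (pq;q)_∞/(q;q)_∞, where the series converge. -/
/-
The summand `(p;q)_n/(q;q)_n · q^n` telescopes: since `(p;q)_{n+1} = (1-p)(pq;q)_n`, the
partial sums are `∑_{n ≤ N} (p;q)_n/(q;q)_n · q^n = (pq;q)_N/(q;q)_N`, which tend to
`(pq;q)_∞/(q;q)_∞`; the infinite products are positive because `∑ log(1 - z q^k)` converges.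
Finally `P_n(0;p,q)² = q^{n+1/2} (p;q)_n/(q;q)_n`.
-/

/-- Finite q-shifted factorial `(z;q)_n`. -/
noncomputable def qp (z q : ℝ) (n : ℕ) : ℝ := ∏ k ∈ Finset.range n, (1 - z * q ^ k)

/-- Infinite q-shifted factorial `(z;q)_∞`. -/
noncomputable def qpInf (z q : ℝ) : ℝ := ∏' k : ℕ, (1 - z * q ^ k)

/-- Value at zero of the orthonormal generalized Stieltjes–Wigert polynomial:
`P_n(0;p,q) = (−1)^n q^{n/2+1/4} √((p;q)_n/(q;q)_n)`. -/
noncomputable def P0 (p q : ℝ) (n : ℕ) : ℝ :=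
  (-1) ^ n * q ^ ((n : ℝ) / 2 + 1 / 4) * Real.sqrt (qp p q n / qp q q n)

lemma one_sub_mul_pow_pos {z q : ℝ} (hz0 : 0 ≤ z) (hz1 : z < 1) (hq0 : 0 ≤ q) (hq1 : q ≤ 1)
    (k : ℕ) : 0 < 1 - z * q ^ k := by
  have : z * q ^ k ≤ z := mul_le_of_le_one_right hz0 (pow_le_one₀ hq0 hq1)
  linarith

lemma qp_pos {z q : ℝ} (hz0 : 0 ≤ z) (hz1 : z < 1) (hq0 : 0 ≤ q) (hq1 : q ≤ 1) (n : ℕ) :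
    0 < qp z q n :=
  Finset.prod_pos fun k _ => one_sub_mul_pow_pos hz0 hz1 hq0 hq1 k

lemma qp_div_qp_nonneg {p q : ℝ} (hp0 : 0 ≤ p) (hp1 : p < 1) (hq0 : 0 ≤ q) (hq1 : q < 1)
    (n : ℕ) : 0 ≤ qp p q n / qp q q n :=
  div_nonneg (qp_pos hp0 hp1 hq0 hq1.le n).le (qp_pos hq0 hq1 hq0 hq1.le n).le

lemma qp_succ (z q : ℝ) (n : ℕ) : qp z q (n + 1) = qp z q n * (1 - z * q ^ n) :=
  Finset.prod_range_succ _ _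

lemma qp_succ' (z q : ℝ) (n : ℕ) : qp z q (n + 1) = (1 - z) * qp (z * q) q n := by
  rw [qp, Finset.prod_range_succ', mul_comm, qp]
  simp only [pow_succ', pow_zero, mul_one, mul_assoc]

lemma summable_log_one_sub_mul_pow (z : ℝ) {q : ℝ} (hq : |q| < 1) :
    Summable fun k : ℕ => Real.log (1 - z * q ^ k) := by
  simpa only [sub_eq_add_neg] using
    Real.summable_log_one_add_of_summable ((summable_geometric_of_abs_lt_one hq).mul_left z).neg

lemma hasProd_qpInf (z : ℝ) {q : ℝ} (hq : |q| < 1) :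
    HasProd (fun k : ℕ => 1 - z * q ^ k) (qpInf z q) := by
  have := Real.multipliable_one_add_of_summable
    ((summable_geometric_of_abs_lt_one hq).mul_left z).neg
  simp only [← sub_eq_add_neg] at this
  exact this.hasProd

lemma qpInf_pos {z q : ℝ} (hz0 : 0 ≤ z) (hz1 : z < 1) (hq0 : 0 ≤ q) (hq1 : q < 1) :
    0 < qpInf z q := by
  rw [qpInf, ← Real.rexp_tsum_eq_tprod (one_sub_mul_pow_pos hz0 hz1 hq0 hq1.le)
    (summable_log_one_sub_mul_pow z (abs_lt.mpr ⟨by linarith, hq1⟩))]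
  exact Real.exp_pos _

lemma sum_range_succ_qp_div_qp_mul_pow (p : ℝ) {q : ℝ} (hq : ∀ n, qp q q n ≠ 0) (N : ℕ) :
    ∑ n ∈ Finset.range (N + 1), qp p q n / qp q q n * q ^ n = qp (p * q) q N / qp q q N := by
  induction N with
  | zero => simp [qp]
  | succ N ih =>
    have hN := hq (N + 1)
    rw [qp_succ] at hN
    rw [Finset.sum_range_succ, ih, qp_succ', qp_succ, qp_succ]
    field_simp [left_ne_zero_of_mul hN, right_ne_zero_of_mul hN]
    ring

lemma hasSum_qp_div_qp_mul_pow {p q : ℝ} (hp0 : 0 ≤ p) (hp1 : p < 1) (hq0 : 0 ≤ q)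
    (hq1 : q < 1) :
    HasSum (fun n : ℕ => qp p q n / qp q q n * q ^ n) (qpInf (p * q) q / qpInf q q) := by
  have hq : |q| < 1 := abs_lt.mpr ⟨by linarith, hq1⟩
  have hqq := qp_pos hq0 hq1 hq0 hq1.le
  have hlim : Filter.Tendsto (fun N : ℕ => qp (p * q) q N / qp q q N) Filter.atTop
      (nhds (qpInf (p * q) q / qpInf q q)) :=
    (hasProd_qpInf (p * q) hq).tendsto_prod_nat.div (hasProd_qpInf q hq).tendsto_prod_nat
      (qpInf_pos hq0 hq1 hq0 hq1).ne'
  rw [hasSum_iff_tendsto_nat_of_nonneg fun n =>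
      mul_nonneg (qp_div_qp_nonneg hp0 hp1 hq0 hq1 n) (pow_nonneg hq0 n),
    ← Filter.tendsto_add_atTop_iff_nat 1]
  simpa only [sum_range_succ_qp_div_qp_mul_pow p fun n => (hqq n).ne'] using hlim

lemma P0_sq {p q : ℝ} (hq : 0 < q) {n : ℕ} (hn : 0 ≤ qp p q n / qp q q n) :
    P0 p q n ^ 2 = Real.sqrt q * (qp p q n / qp q q n * q ^ n) := by
  have hpow : (q ^ ((n : ℝ) / 2 + 1 / 4)) ^ 2 = Real.sqrt q * q ^ n := by
    rw [← Real.rpow_natCast, ← Real.rpow_mul hq.le, Real.sqrt_eq_rpow, ← Real.rpow_natCast q n,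
      ← Real.rpow_add hq]
    congr 1
    push_cast
    ring
  rw [P0, mul_pow, mul_pow, hpow, Real.sq_sqrt hn, ← pow_mul, mul_comm n, pow_mul, neg_one_sq,
    one_pow]
  ring

theorem stmt_2 (p q : ℝ) (hp0 : 0 ≤ p) (hp1 : p < 1) (hq0 : 0 < q) (hq1 : q < 1) :
    Summable (fun n : ℕ => (P0 p q n) ^ 2) ∧
    Summable (fun n : ℕ => qp p q n / qp q q n * q ^ n) ∧
    (∑' n : ℕ, (P0 p q n) ^ 2) = Real.sqrt q * ∑' n : ℕ, qp p q n / qp q q n * q ^ n ∧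
    Real.sqrt q * (∑' n : ℕ, qp p q n / qp q q n * q ^ n)
      = Real.sqrt q * (qpInf (p * q) q / qpInf q q) := by
  have hsum := hasSum_qp_div_qp_mul_pow hp0 hp1 hq0.le hq1
  have hsq (n : ℕ) := P0_sq hq0 (qp_div_qp_nonneg hp0 hp1 hq0.le hq1 n)
  refine ⟨(hsum.summable.mul_left _).congr fun n => (hsq n).symm, hsum.summable, ?_, ?_⟩
  · rw [tsum_congr hsq, tsum_mul_left]
  · rw [hsum.tsum_eq]
end

section
/- Define β_n = q·(1−q^n)·(1−pq^n)/((1+q−(1+p)·q^n)·(1+q−(1+p)·q^{n+1})) for n ≥ 1, m_n = q·(1−q^n)/(1+q−(1+p)·q^{n+1}) and h_n = q·(1−pq^n)/(1+q−(1+p)·q^{n+1}) for n ≥ 0. Then m_0 = 0, 0 ≤ m_n < 1 and 0 < h_n < 1 for all n ≥ 0, and for all n ≥ 1 one has β_n = m_n·(1 − m_{n−1}) and β_n = h_n·(1 − h_{n−1}); i.e., (m_n) is the minimal parameter sequence of the chain sequence (β_n) and (h_n) is a parameter sequence for it. -/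
/-- The chain sequence `β_n`. -/
noncomputable def β (p q : ℝ) (n : ℕ) : ℝ :=
  q * (1 - q ^ n) * (1 - p * q ^ n) /
    ((1 + q - (1 + p) * q ^ n) * (1 + q - (1 + p) * q ^ (n + 1)))

/-- The minimal parameter sequence `m_n`. -/
noncomputable def mseq (p q : ℝ) (n : ℕ) : ℝ :=
  q * (1 - q ^ n) / (1 + q - (1 + p) * q ^ (n + 1))

/-- The parameter sequence `h_n` corresponding to the generalized
Stieltjes–Wigert polynomials. -/
noncomputable def hseq (p q : ℝ) (n : ℕ) : ℝ :=
  q * (1 - p * q ^ n) / (1 + q - (1 + p) * q ^ (n + 1))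

/-!
With `D_k = 1 + q - (1 + p) q^k`, the two parameter sequences satisfy
`1 - m_n = (1 - p q^(n+1)) / D_(n+1)` and `1 - h_n = (1 - q^(n+1)) / D_(n+1)`:
the factors `1 - q^n` and `1 - p q^n` of `β_n` simply swap roles between `m` and `h`.
Both chain-sequence identities, as well as the upper bounds `m_n, h_n < 1`, follow at once,
since all the factors are positive for `p < 1` and `0 < q < 1`.
-/

section

variable {p q : ℝ}

lemma mul_pow_lt_one (hp : p < 1) (hq0 : 0 ≤ q) (hq1 : q ≤ 1) (k : ℕ) : p * q ^ k < 1 := by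
  have hqk : q ^ k ≤ 1 := pow_le_one₀ hq0 hq1
  rcases le_or_gt 0 p with hp0 | hp0
  · nlinarith [mul_le_mul_of_nonneg_left hqk hp0]
  · nlinarith [mul_nonpos_of_nonpos_of_nonneg hp0.le (pow_nonneg hq0 k)]

lemma denom_pos (hp : p < 1) (hq0 : 0 ≤ q) (hq1 : q ≤ 1) (k : ℕ) :
    0 < 1 + q - (1 + p) * q ^ (k + 1) := by
  have hqk : q ^ (k + 1) ≤ q := by
    simpa using pow_le_pow_of_le_one hq0 hq1 (Nat.le_add_left 1 k)
  nlinarith [mul_pow_lt_one hp hq0 hq1 (k + 1)]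

lemma one_sub_mseq (n : ℕ) (h : 1 + q - (1 + p) * q ^ (n + 1) ≠ 0) :
    1 - mseq p q n = (1 - p * q ^ (n + 1)) / (1 + q - (1 + p) * q ^ (n + 1)) := by
  rw [mseq, one_sub_div h]
  ring

lemma one_sub_hseq (n : ℕ) (h : 1 + q - (1 + p) * q ^ (n + 1) ≠ 0) :
    1 - hseq p q n = (1 - q ^ (n + 1)) / (1 + q - (1 + p) * q ^ (n + 1)) := by
  rw [hseq, one_sub_div h]
  ring

lemma β_succ_eq_mseq_mul (n : ℕ) (h : 1 + q - (1 + p) * q ^ (n + 1) ≠ 0) :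
    β p q (n + 1) = mseq p q (n + 1) * (1 - mseq p q n) := by
  rw [one_sub_mseq n h, β, mseq, div_mul_div_comm, mul_comm (1 + q - _)]

lemma β_succ_eq_hseq_mul (n : ℕ) (h : 1 + q - (1 + p) * q ^ (n + 1) ≠ 0) :
    β p q (n + 1) = hseq p q (n + 1) * (1 - hseq p q n) := by
  rw [one_sub_hseq n h, β, hseq, div_mul_div_comm, mul_comm (1 + q - _)]
  ring

lemma mseq_zero : mseq p q 0 = 0 := by
  simp [mseq]

lemma mseq_nonneg (hp : p < 1) (hq0 : 0 ≤ q) (hq1 : q ≤ 1) (n : ℕ) : 0 ≤ mseq p q n :=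
  div_nonneg (mul_nonneg hq0 (sub_nonneg.2 (pow_le_one₀ hq0 hq1)))
    (denom_pos hp hq0 hq1 n).le

lemma mseq_lt_one (hp : p < 1) (hq0 : 0 ≤ q) (hq1 : q ≤ 1) (n : ℕ) : mseq p q n < 1 := by
  have hD := denom_pos hp hq0 hq1 n
  have : 0 < 1 - mseq p q n := by
    rw [one_sub_mseq n hD.ne']
    exact div_pos (sub_pos.2 (mul_pow_lt_one hp hq0 hq1 _)) hD
  linarith

lemma hseq_pos (hp : p < 1) (hq0 : 0 < q) (hq1 : q ≤ 1) (n : ℕ) : 0 < hseq p q n :=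
  div_pos (mul_pos hq0 (sub_pos.2 (mul_pow_lt_one hp hq0.le hq1 n)))
    (denom_pos hp hq0.le hq1 n)

lemma hseq_lt_one (hp : p < 1) (hq0 : 0 ≤ q) (hq1 : q < 1) (n : ℕ) : hseq p q n < 1 := by
  have hD := denom_pos hp hq0 hq1.le n
  have : 0 < 1 - hseq p q n := by
    rw [one_sub_hseq n hD.ne']
    exact div_pos (sub_pos.2 (pow_lt_one₀ hq0 hq1 n.succ_ne_zero)) hD
  linarith

end

theorem stmt_15_general (p q : ℝ) (hp1 : p < 1) (hq0 : 0 < q) (hq1 : q < 1) :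
    mseq p q 0 = 0 ∧
    (∀ n : ℕ, 0 ≤ mseq p q n ∧ mseq p q n < 1) ∧
    (∀ n : ℕ, 0 < hseq p q n ∧ hseq p q n < 1) ∧
    (∀ n : ℕ, 1 ≤ n →
      β p q n = mseq p q n * (1 - mseq p q (n - 1)) ∧
      β p q n = hseq p q n * (1 - hseq p q (n - 1))) := by
  refine ⟨mseq_zero, fun n => ⟨mseq_nonneg hp1 hq0.le hq1.le n, mseq_lt_one hp1 hq0.le hq1.le n⟩,
    fun n => ⟨hseq_pos hp1 hq0 hq1.le n, hseq_lt_one hp1 hq0.le hq1 n⟩, fun n hn => ?_⟩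
  obtain ⟨k, rfl⟩ := Nat.exists_eq_add_of_le' hn
  have hD := (denom_pos hp1 hq0.le hq1.le k).ne'
  exact ⟨β_succ_eq_mseq_mul k hD, β_succ_eq_hseq_mul k hD⟩

theorem stmt_15 (p q : ℝ) (hp0 : 0 ≤ p) (hp1 : p < 1) (hq0 : 0 < q) (hq1 : q < 1) :
    mseq p q 0 = 0 ∧
    (∀ n : ℕ, 0 ≤ mseq p q n ∧ mseq p q n < 1) ∧
    (∀ n : ℕ, 0 < hseq p q n ∧ hseq p q n < 1) ∧
    (∀ n : ℕ, 1 ≤ n →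
      β p q n = mseq p q n * (1 - mseq p q (n - 1)) ∧
      β p q n = hseq p q n * (1 - hseq p q (n - 1))) :=
  stmt_15_general p q hp1 hq0 hq1
end
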